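/- Let D ⊂ ℝ² be a bounded open domain and b(u,v,w) = ∑_{i,j=1}^2 ∫_D u^i (∂_i v^j) w^j dx. There exists a constant C₁ such that for all u, v, w in the divergence-free H¹₀ space V: |b(u,v,w)| ≤ C₁ ‖u‖_{L²}^{1/2} ‖∇u‖_{L²}^{1/2} ‖∇v‖_{L²} ‖w‖_{L²}^{1/2} ‖∇w‖_{L²}^{1/2}. -/

import Mathlib

open MeasureTheory

/-- The Navier–Stokes trilinear form `b(u,v,w) = ∑_{i,j} ∫_D u^i (∂ᵢ v^j) w^j dx`. -/
noncomputable def triForm (D : Set (Fin 2 → ℝ))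
    (u v w : (Fin 2 → ℝ) → (Fin 2 → ℝ)) : ℝ :=
  ∑ i : Fin 2, ∑ j : Fin 2,
    ∫ x in D, u x i * fderiv ℝ v x (Pi.single i 1) j * w x j

/-- `L²(D)` norm of a vector field. -/
noncomputable def l2Norm (D : Set (Fin 2 → ℝ)) (u : (Fin 2 → ℝ) → (Fin 2 → ℝ)) : ℝ :=
  Real.sqrt (∫ x in D, ∑ j : Fin 2, (u x j) ^ 2)

/-- `L²(D)` norm of the gradient of a vector field. -/
noncomputable def gradNorm (D : Set (Fin 2 → ℝ)) (u : (Fin 2 → ℝ) → (Fin 2 → ℝ)) : ℝ :=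
  Real.sqrt (∫ x in D, ∑ i : Fin 2, ∑ j : Fin 2, (fderiv ℝ u x (Pi.single i 1) j) ^ 2)

open Real
open scoped ENNReal NNReal

local notation "μ₀" => (volume : Measure (Fin 2 → ℝ))

private lemma conj22 : Real.HolderConjugate 2 2 := Real.HolderConjugate.two_two

private lemma abs_rpow_two (a : ℝ) : |a| ^ (2:ℝ) = a ^ 2 := by
  rw [show (2:ℝ) = ((2:ℕ):ℝ) by norm_num, Real.rpow_natCast, sq_abs]

/-- Cauchy–Schwarz for real functions. -/
private lemma myCS (f g : (Fin 2 → ℝ) → ℝ) (hf : Continuous f) (hg : Continuous g)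
    (hfc : HasCompactSupport f) (hgc : HasCompactSupport g) :
    ∫ x, |f x| * |g x| ≤ (∫ x, f x ^ 2) ^ ((1:ℝ)/2) * (∫ x, g x ^ 2) ^ ((1:ℝ)/2) := by
  have h := integral_mul_norm_le_Lp_mul_Lq (μ := μ₀) conj22
    (hf.memLp_of_hasCompactSupport hfc) (hg.memLp_of_hasCompactSupport hgc)
  simpa [Real.norm_eq_abs, abs_rpow_two] using h

/-- 2D Ladyzhenskaya inequality for smooth compactly supported scalar functions. -/
private lemma lady : ∃ C : ℝ, 0 ≤ C ∧ ∀ f : (Fin 2 → ℝ) → ℝ, ContDiff ℝ (⊤ : ℕ∞) f →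
    HasCompactSupport f →
    ∫ x, f x ^ 4 ≤ C * ((∫ x, f x ^ 2) * (∫ x, ‖fderiv ℝ f x‖ ^ 2)) := by
  set K : ℝ≥0 := lintegralPowLePowLIntegralFDerivConst μ₀ 2 with hK
  refine ⟨4 * K, by positivity, fun f hf hfc => ?_⟩
  set g : (Fin 2 → ℝ) → ℝ := fun x => f x * f x with hgdef
  have hg : ContDiff ℝ 1 g := (hf.mul hf).of_le (by simp)
  have hgc : HasCompactSupport g := hfc.mul_right
  have hfcont : Continuous f := hf.continuous
  have hf'cont : Continuous (fderiv ℝ f) := hf.continuous_fderiv (by simp)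
  have hp : (↑(Module.finrank ℝ (Fin 2 → ℝ)) : ℝ).HolderConjugate 2 := by
    rw [show Module.finrank ℝ (Fin 2 → ℝ) = 2 from by simp]
    exact (by norm_num : ((2:ℕ):ℝ) = 2) ▸ conj22
  have hGNS := lintegral_pow_le_pow_lintegral_fderiv μ₀ hg hgc hp
  -- pointwise formula for the derivative of g
  have hdg : ∀ x, ‖fderiv ℝ g x‖ = 2 * (|f x| * ‖fderiv ℝ f x‖) := by
    intro x
    have h1 : fderiv ℝ g x = f x • fderiv ℝ f x + f x • fderiv ℝ f x :=
      fderiv_mul (hf.differentiable (by simp) x) (hf.differentiable (by simp) x)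
    have h2 : f x • fderiv ℝ f x + f x • fderiv ℝ f x = (2 * f x) • fderiv ℝ f x := by
      rw [two_mul, add_smul]
    rw [h1, h2, norm_smul, Real.norm_eq_abs, abs_mul, abs_two]; ring
  -- integrability facts
  have hfc4 : HasCompactSupport fun x => f x ^ 4 := by
    have : (fun x => f x ^ 4) = fun x => f x * f x ^ 3 := by funext x; ring
    rw [this]; exact hfc.mul_right
  have hint4 : Integrable (fun x => f x ^ 4) μ₀ :=
    (hfcont.pow 4).integrable_of_hasCompactSupport hfc4
  have hintdg : Integrable (fderiv ℝ g) μ₀ :=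
    (hg.continuous_fderiv one_ne_zero).integrable_of_hasCompactSupport (hgc.fderiv ℝ)
  set A := ∫ x, f x ^ 4 with hA
  set B := ∫ x, f x ^ 2 with hB
  set Dq := ∫ x, ‖fderiv ℝ f x‖ ^ 2 with hD
  set I := ∫ x, ‖fderiv ℝ g x‖ with hI
  have hI0 : 0 ≤ I := integral_nonneg fun x => norm_nonneg _
  have hB0 : 0 ≤ B := integral_nonneg fun x => sq_nonneg _
  have hD0 : 0 ≤ Dq := integral_nonneg fun x => sq_nonneg _
  -- translate GNS to real integrals
  have h1 : ENNReal.ofReal A = ∫⁻ x, (‖g x‖₊ : ℝ≥0∞) ^ (2:ℝ) := by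
    rw [MeasureTheory.ofReal_integral_eq_lintegral_ofReal hint4
      (ae_of_all _ fun x => by positivity)]
    refine lintegral_congr fun x => ?_
    rw [show ((‖g x‖₊ : ℝ≥0∞)) = ENNReal.ofReal ‖g x‖ from (ofReal_norm _).symm,
      ENNReal.ofReal_rpow_of_nonneg (norm_nonneg _) (by norm_num : (0:ℝ) ≤ 2)]
    congr 1
    rw [Real.norm_eq_abs, abs_rpow_two]; simp only [hgdef]; ring
  have h2 : (∫⁻ x, ‖fderiv ℝ g x‖ₑ) = ENNReal.ofReal I :=
    (ofReal_integral_norm_eq_lintegral_enorm hintdg).symm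
  have h3 : ENNReal.ofReal A ≤ ENNReal.ofReal ((K : ℝ) * I ^ 2) := by
    rw [h1]
    refine hGNS.trans (le_of_eq ?_)
    rw [h2, ENNReal.ofReal_rpow_of_nonneg hI0 (by norm_num : (0:ℝ) ≤ 2),
      show I ^ (2:ℝ) = I ^ 2 from by
        rw [show (2:ℝ) = ((2:ℕ):ℝ) from by norm_num, Real.rpow_natCast],
      ENNReal.ofReal_mul (by positivity), ENNReal.ofReal_coe_nnreal]
  have hAle : A ≤ (K : ℝ) * I ^ 2 :=
    (ENNReal.ofReal_le_ofReal_iff (by positivity)).mp h3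
  -- Cauchy–Schwarz on I
  have hIle : I ≤ 2 * ((B ^ ((1:ℝ)/2)) * (Dq ^ ((1:ℝ)/2))) := by
    have heq : I = 2 * ∫ x, |f x| * |‖fderiv ℝ f x‖| := by
      rw [← MeasureTheory.integral_const_mul]
      refine integral_congr_ae (ae_of_all _ fun x => ?_)
      simp only [abs_of_nonneg (norm_nonneg (fderiv ℝ f x))]
      exact hdg x
    rw [heq]
    have hcs := myCS f (fun x => ‖fderiv ℝ f x‖) hfcont (hf'cont.norm) hfc
      ((hfc.fderiv ℝ).norm)
    have : (∫ x, ‖fderiv ℝ f x‖ ^ 2) = Dq := rfl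
    nlinarith [hcs]
  have hsq : I ^ 2 ≤ 4 * (B * Dq) := by
    have h4 : (2 * ((B ^ ((1:ℝ)/2)) * (Dq ^ ((1:ℝ)/2)))) ^ 2 = 4 * (B * Dq) := by
      have hb : (B ^ ((1:ℝ)/2)) ^ 2 = B := by
        rw [← Real.rpow_natCast (B ^ ((1:ℝ)/2)) 2, ← Real.rpow_mul hB0]; norm_num
      have hd : (Dq ^ ((1:ℝ)/2)) ^ 2 = Dq := by
        rw [← Real.rpow_natCast (Dq ^ ((1:ℝ)/2)) 2, ← Real.rpow_mul hD0]; norm_num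
      calc (2 * ((B ^ ((1:ℝ)/2)) * (Dq ^ ((1:ℝ)/2)))) ^ 2
          = 4 * ((B ^ ((1:ℝ)/2)) ^ 2 * (Dq ^ ((1:ℝ)/2)) ^ 2) := by ring
        _ = 4 * (B * Dq) := by rw [hb, hd]
    calc I ^ 2 ≤ (2 * ((B ^ ((1:ℝ)/2)) * (Dq ^ ((1:ℝ)/2)))) ^ 2 := by
          apply pow_le_pow_left₀ hI0 hIle
      _ = 4 * (B * Dq) := h4
  calc A ≤ (K : ℝ) * I ^ 2 := hAle
    _ ≤ (K : ℝ) * (4 * (B * Dq)) := by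
        exact mul_le_mul_of_nonneg_left hsq (K.coe_nonneg)
    _ = 4 * (K : ℝ) * (B * Dq) := by ring

private lemma cs_sq {f : (Fin 2 → ℝ) → ℝ} (hf : HasCompactSupport f) :
    HasCompactSupport fun x => f x ^ 2 := by
  have : (fun x => f x ^ 2) = fun x => f x * f x := by funext x; ring
  rw [this]; exact hf.mul_right

private lemma rpow_half_half {Y : ℝ} (hY : 0 ≤ Y) :
    (Y ^ ((1:ℝ)/2)) ^ ((1:ℝ)/2) = Y ^ ((1:ℝ)/4) := by
  rw [← Real.rpow_mul hY]; norm_num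

/-- Triple Hölder inequality `L⁴ × L² × L⁴`. -/
private lemma holder3 (g₁ g₂ g₃ : (Fin 2 → ℝ) → ℝ)
    (h₁ : Continuous g₁) (h₂ : Continuous g₂) (h₃ : Continuous g₃)
    (hc₁ : HasCompactSupport g₁) (hc₂ : HasCompactSupport g₂)
    (hc₃ : HasCompactSupport g₃) :
    |∫ x, g₁ x * g₂ x * g₃ x| ≤
      (∫ x, g₁ x ^ 4) ^ ((1:ℝ)/4) * (∫ x, g₃ x ^ 4) ^ ((1:ℝ)/4) *
        (∫ x, g₂ x ^ 2) ^ ((1:ℝ)/2) := by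
  set Y := ∫ x, g₁ x ^ 4 with hY
  set Z := ∫ x, g₃ x ^ 4 with hZ
  set W := ∫ x, g₂ x ^ 2 with hW
  have hY0 : 0 ≤ Y := integral_nonneg fun x => by positivity
  have hZ0 : 0 ≤ Z := integral_nonneg fun x => by positivity
  have hW0 : 0 ≤ W := integral_nonneg fun x => by positivity
  set X := ∫ x, (g₁ x * g₃ x) ^ 2 with hX
  have hX0 : 0 ≤ X := integral_nonneg fun x => sq_nonneg _
  -- step 1: Cauchy–Schwarz splitting off g₂
  have hint : Integrable (fun x => g₁ x * g₂ x * g₃ x) μ₀ :=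
    ((h₁.mul h₂).mul h₃).integrable_of_hasCompactSupport (hc₁.mul_right.mul_right)
  have step1 : |∫ x, g₁ x * g₂ x * g₃ x| ≤ X ^ ((1:ℝ)/2) * W ^ ((1:ℝ)/2) := by
    have habs : |∫ x, g₁ x * g₂ x * g₃ x| ≤ ∫ x, |g₁ x * g₃ x| * |g₂ x| := by
      have h := norm_integral_le_integral_norm (μ := μ₀) fun x => g₁ x * g₂ x * g₃ x
      rw [Real.norm_eq_abs] at h
      refine h.trans (le_of_eq ?_)
      refine integral_congr_ae (ae_of_all _ fun x => ?_)
      simp only [Real.norm_eq_abs, abs_mul]; ring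
    exact habs.trans (myCS (fun x => g₁ x * g₃ x) g₂ (h₁.mul h₃) h₂ hc₁.mul_right hc₂)
  -- step 2: Cauchy–Schwarz on X
  have step2 : X ≤ Y ^ ((1:ℝ)/2) * Z ^ ((1:ℝ)/2) := by
    have hXeq : X = ∫ x, |g₁ x ^ 2| * |g₃ x ^ 2| := by
      refine integral_congr_ae (ae_of_all _ fun x => ?_)
      simp only [abs_of_nonneg (sq_nonneg (g₁ x)), abs_of_nonneg (sq_nonneg (g₃ x))]
      ring
    have hcs := myCS (fun x => g₁ x ^ 2) (fun x => g₃ x ^ 2) (h₁.pow 2) (h₃.pow 2)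
      (cs_sq hc₁) (cs_sq hc₃)
    have e1 : (∫ x, (g₁ x ^ 2) ^ 2) = Y := by
      rw [hY]; congr 1; funext x; ring
    have e2 : (∫ x, (g₃ x ^ 2) ^ 2) = Z := by
      rw [hZ]; congr 1; funext x; ring
    rw [hXeq]
    rw [e1, e2] at hcs
    exact hcs
  -- combine
  have step3 : X ^ ((1:ℝ)/2) ≤ Y ^ ((1:ℝ)/4) * Z ^ ((1:ℝ)/4) := by
    calc X ^ ((1:ℝ)/2) ≤ (Y ^ ((1:ℝ)/2) * Z ^ ((1:ℝ)/2)) ^ ((1:ℝ)/2) :=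
          Real.rpow_le_rpow hX0 step2 (by norm_num)
      _ = Y ^ ((1:ℝ)/4) * Z ^ ((1:ℝ)/4) := by
          rw [Real.mul_rpow (Real.rpow_nonneg hY0 _) (Real.rpow_nonneg hZ0 _),
            rpow_half_half hY0, rpow_half_half hZ0]
  calc |∫ x, g₁ x * g₂ x * g₃ x| ≤ X ^ ((1:ℝ)/2) * W ^ ((1:ℝ)/2) := step1
    _ ≤ (Y ^ ((1:ℝ)/4) * Z ^ ((1:ℝ)/4)) * W ^ ((1:ℝ)/2) :=
        mul_le_mul_of_nonneg_right step3 (Real.rpow_nonneg hW0 _)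
    _ = Y ^ ((1:ℝ)/4) * Z ^ ((1:ℝ)/4) * W ^ ((1:ℝ)/2) := by ring

private lemma opnorm_sq_le (L : (Fin 2 → ℝ) →L[ℝ] ℝ) :
    ‖L‖ ^ 2 ≤ 2 * ∑ i : Fin 2, (L (Pi.single i 1)) ^ 2 := by
  set a := L (Pi.single 0 1) with ha
  set b := L (Pi.single 1 1) with hb
  have hbound : ‖L‖ ≤ |a| + |b| := by
    refine L.opNorm_le_bound (by positivity) fun x => ?_
    have hx : x = x 0 • (Pi.single 0 1 : Fin 2 → ℝ) + x 1 • (Pi.single 1 1 : Fin 2 → ℝ) := by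
      funext j; fin_cases j <;> simp [Pi.single_apply]
    calc ‖L x‖ = |x 0 * a + x 1 * b| := by
          conv_lhs => rw [hx]
          simp [map_add, _root_.map_smul, smul_eq_mul, Real.norm_eq_abs, ha, hb]
      _ ≤ |x 0| * |a| + |x 1| * |b| := by
          refine (abs_add_le _ _).trans (le_of_eq ?_); rw [abs_mul, abs_mul]
      _ ≤ ‖x‖ * |a| + ‖x‖ * |b| := by
          gcongr <;> exact norm_le_pi_norm x _
      _ = (|a| + |b|) * ‖x‖ := by ring
  have h2 : ‖L‖ ^ 2 ≤ (|a| + |b|) ^ 2 := pow_le_pow_left₀ (norm_nonneg _) hbound 2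
  have h3 : ∑ i : Fin 2, (L (Pi.single i 1)) ^ 2 = a ^ 2 + b ^ 2 := by
    rw [Fin.sum_univ_two]
  rw [h3]
  nlinarith [sq_abs a, sq_abs b, sq_nonneg (|a| - |b|)]

private lemma fderiv_proj {u : (Fin 2 → ℝ) → (Fin 2 → ℝ)} (hu : ContDiff ℝ (⊤ : ℕ∞) u)
    (j : Fin 2) (x y : Fin 2 → ℝ) :
    fderiv ℝ (fun x => u x j) x y = fderiv ℝ u x y j := by
  have h : HasFDerivAt u (fderiv ℝ u x) x := (hu.differentiable (by simp) x).hasFDerivAt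
  have h2 : HasFDerivAt (fun x => u x j)
      ((ContinuousLinearMap.proj j : (Fin 2 → ℝ) →L[ℝ] ℝ).comp (fderiv ℝ u x)) x :=
    (ContinuousLinearMap.proj j :
      (Fin 2 → ℝ) →L[ℝ] ℝ).hasFDerivAt.comp x h
  rw [h2.fderiv]; rfl

private lemma comp_cont {u : (Fin 2 → ℝ) → (Fin 2 → ℝ)} (hu : ContDiff ℝ (⊤ : ℕ∞) u) (i : Fin 2) :
    Continuous fun x => u x i := (continuous_apply i).comp hu.continuous

private lemma comp_cs {u : (Fin 2 → ℝ) → (Fin 2 → ℝ)} (huc : HasCompactSupport u) (i : Fin 2) :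
    HasCompactSupport fun x => u x i := huc.comp_left (g := fun y : Fin 2 → ℝ => y i) rfl

private lemma fderiv_entry_cont {u : (Fin 2 → ℝ) → (Fin 2 → ℝ)} (hu : ContDiff ℝ (⊤ : ℕ∞) u)
    (i j : Fin 2) : Continuous fun x => fderiv ℝ u x (Pi.single i 1) j :=
  (continuous_apply j).comp
    ((ContinuousLinearMap.apply ℝ (Fin 2 → ℝ) (Pi.single i 1)).continuous.comp
      (hu.continuous_fderiv (by simp)))

private lemma fderiv_entry_cs {u : (Fin 2 → ℝ) → (Fin 2 → ℝ)} (huc : HasCompactSupport u)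
    (i j : Fin 2) : HasCompactSupport fun x => fderiv ℝ u x (Pi.single i 1) j :=
  (huc.fderiv ℝ).comp_left
    (g := fun L : (Fin 2 → ℝ) →L[ℝ] (Fin 2 → ℝ) => L (Pi.single i 1) j) rfl

private lemma gradsum_cont {u : (Fin 2 → ℝ) → (Fin 2 → ℝ)} (hu : ContDiff ℝ (⊤ : ℕ∞) u) :
    Continuous fun x => ∑ i : Fin 2, ∑ j : Fin 2, fderiv ℝ u x (Pi.single i 1) j ^ 2 :=
  continuous_finset_sum _ fun i _ => continuous_finset_sum _ fun j _ =>
    (fderiv_entry_cont hu i j).pow 2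

private lemma gradsum_cs {u : (Fin 2 → ℝ) → (Fin 2 → ℝ)} (huc : HasCompactSupport u) :
    HasCompactSupport fun x => ∑ i : Fin 2, ∑ j : Fin 2, fderiv ℝ u x (Pi.single i 1) j ^ 2 :=
  (huc.fderiv ℝ).comp_left
    (g := fun L : (Fin 2 → ℝ) →L[ℝ] (Fin 2 → ℝ) =>
      ∑ i : Fin 2, ∑ j : Fin 2, (L (Pi.single i 1) j) ^ 2) (by simp)

private lemma sqsum_cont {u : (Fin 2 → ℝ) → (Fin 2 → ℝ)} (hu : ContDiff ℝ (⊤ : ℕ∞) u) :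
    Continuous fun x => ∑ j : Fin 2, u x j ^ 2 :=
  continuous_finset_sum _ fun j _ => (comp_cont hu j).pow 2

private lemma sqsum_cs {u : (Fin 2 → ℝ) → (Fin 2 → ℝ)} (huc : HasCompactSupport u) :
    HasCompactSupport fun x => ∑ j : Fin 2, u x j ^ 2 :=
  huc.comp_left (g := fun y : Fin 2 → ℝ => ∑ j : Fin 2, (y j) ^ 2) (by simp)

/-- `L⁴` bound for a component of a vector field in terms of the full norms. -/
private lemma field_L4_bound (C : ℝ) (hC : 0 ≤ C)
    (hlady : ∀ f : (Fin 2 → ℝ) → ℝ, ContDiff ℝ (⊤ : ℕ∞) f → HasCompactSupport f →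
      ∫ x, f x ^ 4 ≤ C * ((∫ x, f x ^ 2) * (∫ x, ‖fderiv ℝ f x‖ ^ 2)))
    {u : (Fin 2 → ℝ) → (Fin 2 → ℝ)} (hu : ContDiff ℝ (⊤ : ℕ∞) u) (huc : HasCompactSupport u)
    (i : Fin 2) :
    ∫ x, u x i ^ 4 ≤ (2 * C) * ((∫ x, ∑ j : Fin 2, u x j ^ 2) *
      (∫ x, ∑ i' : Fin 2, ∑ j : Fin 2, fderiv ℝ u x (Pi.single i' 1) j ^ 2)) := by
  have hf : ContDiff ℝ (⊤ : ℕ∞) fun x => u x i := contDiff_pi.mp hu i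
  have hfc : HasCompactSupport fun x => u x i := comp_cs huc i
  have h1 := hlady _ hf hfc
  set Su := ∫ x, ∑ j : Fin 2, u x j ^ 2 with hSu
  set Gu := ∫ x, ∑ i' : Fin 2, ∑ j : Fin 2, fderiv ℝ u x (Pi.single i' 1) j ^ 2 with hGu
  have hSu0 : 0 ≤ Su := integral_nonneg fun x => by positivity
  have hGu0 : 0 ≤ Gu := integral_nonneg fun x => by positivity
  -- ∫ (u·i)² ≤ Su
  have h2 : (∫ x, u x i ^ 2) ≤ Su := by
    refine integral_mono (((comp_cont hu i).pow 2).integrable_of_hasCompactSupport (cs_sq hfc))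
      ((sqsum_cont hu).integrable_of_hasCompactSupport (sqsum_cs huc)) fun x => ?_
    exact Finset.single_le_sum (f := fun j => u x j ^ 2) (fun j _ => sq_nonneg _)
      (Finset.mem_univ i)
  -- ∫ ‖∇(u·i)‖² ≤ 2 Gu
  have h3 : (∫ x, ‖fderiv ℝ (fun x => u x i) x‖ ^ 2) ≤ 2 * Gu := by
    have hcont : Continuous fun x => ‖fderiv ℝ (fun x => u x i) x‖ ^ 2 :=
      ((hf.continuous_fderiv (by simp)).norm).pow 2
    have hcs : HasCompactSupport fun x => ‖fderiv ℝ (fun x => u x i) x‖ ^ 2 :=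
      cs_sq ((hfc.fderiv ℝ).norm)
    have hrhs : Integrable
        (fun x => 2 * ∑ i' : Fin 2, ∑ j : Fin 2, fderiv ℝ u x (Pi.single i' 1) j ^ 2) μ₀ :=
      (continuous_const.mul (gradsum_cont hu)).integrable_of_hasCompactSupport
        ((gradsum_cs huc).comp_left (g := fun t : ℝ => 2 * t) (by simp))
    have hmono : ∀ x, ‖fderiv ℝ (fun x => u x i) x‖ ^ 2 ≤
        2 * ∑ i' : Fin 2, ∑ j : Fin 2, fderiv ℝ u x (Pi.single i' 1) j ^ 2 := by
      intro x
      have ho := opnorm_sq_le (fderiv ℝ (fun x => u x i) x)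
      have he : ∀ i' : Fin 2, fderiv ℝ (fun x => u x i) x (Pi.single i' 1) =
          fderiv ℝ u x (Pi.single i' 1) i := fun i' => fderiv_proj hu i x _
      refine ho.trans ?_
      have hsum : ∑ i' : Fin 2, fderiv ℝ (fun x => u x i) x (Pi.single i' 1) ^ 2 ≤
          ∑ i' : Fin 2, ∑ j : Fin 2, fderiv ℝ u x (Pi.single i' 1) j ^ 2 := by
        refine Finset.sum_le_sum fun i' _ => ?_
        rw [he i']
        exact Finset.single_le_sum (f := fun j => fderiv ℝ u x (Pi.single i' 1) j ^ 2)
          (fun j _ => sq_nonneg _) (Finset.mem_univ i)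
      linarith
    have := integral_mono (hcont.integrable_of_hasCompactSupport hcs) hrhs hmono
    rwa [MeasureTheory.integral_const_mul] at this
  have h4 : (∫ x, u x i ^ 2) * (∫ x, ‖fderiv ℝ (fun x => u x i) x‖ ^ 2) ≤ Su * (2 * Gu) := by
    refine mul_le_mul h2 h3 (integral_nonneg fun x => sq_nonneg _) hSu0
  calc ∫ x, u x i ^ 4 ≤ C * ((∫ x, u x i ^ 2) * (∫ x, ‖fderiv ℝ (fun x => u x i) x‖ ^ 2)) := h1
    _ ≤ C * (Su * (2 * Gu)) := mul_le_mul_of_nonneg_left h4 hC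
    _ = (2 * C) * (Su * Gu) := by ring

section mainproof

variable {D : Set (Fin 2 → ℝ)}

private lemma vanish {z : (Fin 2 → ℝ) → (Fin 2 → ℝ)} (hzs : tsupport z ⊆ D) :
    ∀ x ∉ D, z x = 0 := fun x hx =>
  image_eq_zero_of_notMem_tsupport fun h => hx (hzs h)

private lemma vanish_fderiv {z : (Fin 2 → ℝ) → (Fin 2 → ℝ)} (hzs : tsupport z ⊆ D) :
    ∀ x ∉ D, fderiv ℝ z x = 0 := by
  intro x hx
  by_contra h
  exact hx (hzs (support_fderiv_subset (𝕜 := ℝ) h))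

/-- the Ladyzhenskaya-type estimate for the trilinear form on a bounded open
`D ⊆ ℝ²`: there is a constant `C₁` such that for all divergence-free compactly supported
fields `u, v, w` (a dense subspace of `V`):
`|b(u,v,w)| ≤ C₁ ‖u‖^{1/2} ‖∇u‖^{1/2} ‖∇v‖ ‖w‖^{1/2} ‖∇w‖^{1/2}`. -/
theorem stmt16 (D : Set (Fin 2 → ℝ)) (hD : IsOpen D) (hDb : Bornology.IsBounded D) :
    ∃ C₁ : ℝ, 0 ≤ C₁ ∧ ∀ u v w : (Fin 2 → ℝ) → (Fin 2 → ℝ),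
      ContDiff ℝ (⊤ : ℕ∞) u → ContDiff ℝ (⊤ : ℕ∞) v → ContDiff ℝ (⊤ : ℕ∞) w →
      HasCompactSupport u → HasCompactSupport v → HasCompactSupport w →
      tsupport u ⊆ D → tsupport v ⊆ D → tsupport w ⊆ D →
      (∀ x, ∑ i, fderiv ℝ u x (Pi.single i 1) i = 0) →
      (∀ x, ∑ i, fderiv ℝ v x (Pi.single i 1) i = 0) →
      (∀ x, ∑ i, fderiv ℝ w x (Pi.single i 1) i = 0) →
      |triForm D u v w| ≤
        C₁ * (l2Norm D u) ^ ((1:ℝ)/2) * (gradNorm D u) ^ ((1:ℝ)/2) *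
          (gradNorm D v) * (l2Norm D w) ^ ((1:ℝ)/2) * (gradNorm D w) ^ ((1:ℝ)/2) := by
  obtain ⟨C, hC0, hlady⟩ := lady
  refine ⟨4 * ((2*C) ^ ((1:ℝ)/4)) ^ 2, by positivity,
    fun u v w hu hv hw huc hvc hwc hus hvs hws _ _ _ => ?_⟩
  -- set-integrals are global integrals
  set Su := ∫ x, ∑ j : Fin 2, u x j ^ 2 with hSudef
  set Sw := ∫ x, ∑ j : Fin 2, w x j ^ 2 with hSwdef
  set Gu := ∫ x, ∑ i : Fin 2, ∑ j : Fin 2, fderiv ℝ u x (Pi.single i 1) j ^ 2 with hGudef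
  set Gv := ∫ x, ∑ i : Fin 2, ∑ j : Fin 2, fderiv ℝ v x (Pi.single i 1) j ^ 2 with hGvdef
  set Gw := ∫ x, ∑ i : Fin 2, ∑ j : Fin 2, fderiv ℝ w x (Pi.single i 1) j ^ 2 with hGwdef
  have hSu0 : 0 ≤ Su := integral_nonneg fun x => by positivity
  have hSw0 : 0 ≤ Sw := integral_nonneg fun x => by positivity
  have hGu0 : 0 ≤ Gu := integral_nonneg fun x => by positivity
  have hGv0 : 0 ≤ Gv := integral_nonneg fun x => by positivity
  have hGw0 : 0 ≤ Gw := integral_nonneg fun x => by positivity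
  have hl2u : l2Norm D u = Su ^ ((1:ℝ)/2) := by
    rw [l2Norm, setIntegral_eq_integral_of_forall_compl_eq_zero
      (fun x hx => by simp [congrFun (vanish hus x hx)]), ← Real.sqrt_eq_rpow]
  have hl2w : l2Norm D w = Sw ^ ((1:ℝ)/2) := by
    rw [l2Norm, setIntegral_eq_integral_of_forall_compl_eq_zero
      (fun x hx => by simp [congrFun (vanish hws x hx)]), ← Real.sqrt_eq_rpow]
  have hgru : gradNorm D u = Gu ^ ((1:ℝ)/2) := by
    rw [gradNorm, setIntegral_eq_integral_of_forall_compl_eq_zero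
      (fun x hx => by simp [vanish_fderiv hus x hx]), ← Real.sqrt_eq_rpow]
  have hgrv : gradNorm D v = Gv ^ ((1:ℝ)/2) := by
    rw [gradNorm, setIntegral_eq_integral_of_forall_compl_eq_zero
      (fun x hx => by simp [vanish_fderiv hvs x hx]), ← Real.sqrt_eq_rpow]
  have hgrw : gradNorm D w = Gw ^ ((1:ℝ)/2) := by
    rw [gradNorm, setIntegral_eq_integral_of_forall_compl_eq_zero
      (fun x hx => by simp [vanish_fderiv hws x hx]), ← Real.sqrt_eq_rpow]
  -- the per-term bound
  set Bnd := ((2*C) ^ ((1:ℝ)/4) * (Su ^ ((1:ℝ)/4) * Gu ^ ((1:ℝ)/4))) *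
      ((2*C) ^ ((1:ℝ)/4) * (Sw ^ ((1:ℝ)/4) * Gw ^ ((1:ℝ)/4))) * Gv ^ ((1:ℝ)/2) with hBnd
  have hterm : ∀ i j : Fin 2,
      |∫ x, u x i * fderiv ℝ v x (Pi.single i 1) j * w x j| ≤ Bnd := by
    intro i j
    have h3 := holder3 (fun x => u x i) (fun x => fderiv ℝ v x (Pi.single i 1) j)
      (fun x => w x j) (comp_cont hu i) (fderiv_entry_cont hv i j) (comp_cont hw j)
      (comp_cs huc i) (fderiv_entry_cs hvc i j) (comp_cs hwc j)
    refine h3.trans ?_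
    have hYu := field_L4_bound C hC0 hlady hu huc i
    have hYw := field_L4_bound C hC0 hlady hw hwc j
    have hW : (∫ x, fderiv ℝ v x (Pi.single i 1) j ^ 2) ≤ Gv := by
      refine integral_mono
        (((fderiv_entry_cont hv i j).pow 2).integrable_of_hasCompactSupport
          (cs_sq (fderiv_entry_cs hvc i j)))
        ((gradsum_cont hv).integrable_of_hasCompactSupport (gradsum_cs hvc)) fun x => ?_
      refine le_trans (Finset.single_le_sum
        (f := fun j' => fderiv ℝ v x (Pi.single i 1) j' ^ 2)
        (fun _ _ => sq_nonneg _) (Finset.mem_univ j)) ?_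
      exact Finset.single_le_sum
        (f := fun i' => ∑ j' : Fin 2, fderiv ℝ v x (Pi.single i' 1) j' ^ 2)
        (fun _ _ => Finset.sum_nonneg fun _ _ => sq_nonneg _) (Finset.mem_univ i)
    have hY1 : (∫ x, u x i ^ 4) ^ ((1:ℝ)/4) ≤
        (2*C) ^ ((1:ℝ)/4) * (Su ^ ((1:ℝ)/4) * Gu ^ ((1:ℝ)/4)) := by
      refine le_trans (Real.rpow_le_rpow (integral_nonneg fun x => by positivity) hYu
        (by norm_num)) (le_of_eq ?_)
      rw [Real.mul_rpow (by positivity) (by positivity),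
        Real.mul_rpow hSu0 hGu0]
    have hY2 : (∫ x, w x j ^ 4) ^ ((1:ℝ)/4) ≤
        (2*C) ^ ((1:ℝ)/4) * (Sw ^ ((1:ℝ)/4) * Gw ^ ((1:ℝ)/4)) := by
      refine le_trans (Real.rpow_le_rpow (integral_nonneg fun x => by positivity) hYw
        (by norm_num)) (le_of_eq ?_)
      rw [Real.mul_rpow (by positivity) (by positivity),
        Real.mul_rpow hSw0 hGw0]
    have hW1 : (∫ x, fderiv ℝ v x (Pi.single i 1) j ^ 2) ^ ((1:ℝ)/2) ≤ Gv ^ ((1:ℝ)/2) :=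
      Real.rpow_le_rpow (integral_nonneg fun x => sq_nonneg _) hW (by norm_num)
    rw [hBnd]
    have hn1 : (0:ℝ) ≤ (∫ x, u x i ^ 4) ^ ((1:ℝ)/4) :=
      Real.rpow_nonneg (integral_nonneg fun x => by positivity) _
    have hn2 : (0:ℝ) ≤ (∫ x, w x j ^ 4) ^ ((1:ℝ)/4) :=
      Real.rpow_nonneg (integral_nonneg fun x => by positivity) _
    have hn3 : (0:ℝ) ≤ (∫ x, fderiv ℝ v x (Pi.single i 1) j ^ 2) ^ ((1:ℝ)/2) :=
      Real.rpow_nonneg (integral_nonneg fun x => sq_nonneg _) _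
    exact mul_le_mul (mul_le_mul hY1 hY2 hn2 (by positivity)) hW1 hn3 (by positivity)
  -- sum the four terms
  have htri : triForm D u v w = ∑ i : Fin 2, ∑ j : Fin 2,
      ∫ x, u x i * fderiv ℝ v x (Pi.single i 1) j * w x j := by
    rw [triForm]
    refine Finset.sum_congr rfl fun i _ => Finset.sum_congr rfl fun j _ => ?_
    refine setIntegral_eq_integral_of_forall_compl_eq_zero fun x hx => ?_
    simp [congrFun (vanish hus x hx) i]
  have habs : |triForm D u v w| ≤ 4 * Bnd := by
    rw [htri]
    refine le_trans (Finset.abs_sum_le_sum_abs _ _) ?_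
    refine le_trans (Finset.sum_le_sum fun i _ => Finset.abs_sum_le_sum_abs _ _) ?_
    refine le_trans (Finset.sum_le_sum fun i _ => Finset.sum_le_sum fun j _ => hterm i j) ?_
    simp [Finset.sum_const]
    ring_nf
    norm_num
  refine habs.trans (le_of_eq ?_)
  rw [hl2u, hl2w, hgru, hgrv, hgrw, hBnd,
    rpow_half_half hSu0, rpow_half_half hGu0, rpow_half_half hSw0, rpow_half_half hGw0]
  ring

end mainproof
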